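/- Let B be a finite Blaschke product of degree n with sup_{|z|=1}|B'(z)| = inf_{|z|=1}|B'(z)| = n (i.e., |B'| is identically n on the unit circle). Then B(z) = α z^n for some unimodular constant α. -/

import Mathlib

/-!
For `|z| = 1` and `|a| < 1`, `z` times the logarithmic derivative of the Blaschke factor
`(z - a) / (1 - ā z)` is the Poisson kernel `(1 - |a|²) / |z - a|² ≥ 0`. Since `|B| = 1` on the
circle, `|B'(z)| = |z B'(z) / B(z)|` is the sum of the Poisson kernels of the zeros `a_k`.

A zero `a_k = 0` contributes the constant `1`, so if the sum is `n` on the circle, the kernels of the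
nonzero `a_k`, indexed by `W`, sum to `#W`. Clearing the denominators `(z - a)(1 - ā z)` turns this
into an entire function vanishing on the circle whose value at `0` is `±#W ∏_{k ∈ W} a_k`. By the
maximum modulus principle this value is `0`, which forces `W = ∅`.
-/

open ComplexConjugate Finset Metric

noncomputable def blaschkeFactor (a z : ℂ) : ℂ := (z - a) / (1 - conj a * z)

section BlaschkeFactor

variable {a z : ℂ}

lemma hasDerivAt_blaschkeFactor (h : 1 - conj a * z ≠ 0) :
    HasDerivAt (blaschkeFactor a) ((1 - conj a * a) / (1 - conj a * z) ^ 2) z := by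
  have hnum : HasDerivAt (fun w : ℂ => w - a) 1 z := (hasDerivAt_id z).sub_const a
  have hden : HasDerivAt (fun w : ℂ => 1 - conj a * w) (-conj a) z := by
    simpa using ((hasDerivAt_id z).const_mul (conj a)).const_sub 1
  exact (hnum.div hden h).congr_deriv (by ring)

lemma logDeriv_blaschkeFactor (hza : z ≠ a) (h : 1 - conj a * z ≠ 0) :
    logDeriv (blaschkeFactor a) z = (1 - conj a * a) / ((z - a) * (1 - conj a * z)) := by
  rw [logDeriv_apply, (hasDerivAt_blaschkeFactor h).deriv, blaschkeFactor]
  have : z - a ≠ 0 := sub_ne_zero.mpr hza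
  field_simp

lemma one_sub_conj_mul_eq_mul_conj_sub (hz : ‖z‖ = 1) : 1 - conj a * z = z * conj (z - a) := by
  have : z * conj z = 1 := by rw [Complex.mul_conj', hz]; norm_num
  rw [map_sub, mul_sub, this]
  ring

lemma one_sub_conj_mul_ne_zero (hz : ‖z‖ = 1) (hza : z ≠ a) : 1 - conj a * z ≠ 0 := by
  rw [one_sub_conj_mul_eq_mul_conj_sub hz]
  exact mul_ne_zero (ne_zero_of_norm_ne_zero (hz ▸ one_ne_zero))
    ((map_ne_zero _).mpr (sub_ne_zero.mpr hza))

lemma norm_blaschkeFactor (hz : ‖z‖ = 1) (hza : z ≠ a) : ‖blaschkeFactor a z‖ = 1 := by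
  rw [blaschkeFactor, one_sub_conj_mul_eq_mul_conj_sub hz, norm_div, norm_mul, hz, one_mul,
    Complex.norm_conj, div_self (norm_ne_zero_iff.mpr (sub_ne_zero.mpr hza))]

lemma ofReal_poissonKernel_mul_eq (hz : ‖z‖ = 1) (hza : z ≠ a) :
    (poissonKernel 0 a z : ℂ) * ((z - a) * (1 - conj a * z)) = (1 - ‖a‖ ^ 2) * z := by
  have hza' : (‖z - a‖ : ℂ) ≠ 0 := by simpa [sub_eq_zero] using hza
  rw [one_sub_conj_mul_eq_mul_conj_sub hz, poissonKernel_def]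
  simp only [sub_zero, hz]
  rw [show (z - a) * (z * conj (z - a)) = z * ((z - a) * conj (z - a)) by ring,
    Complex.mul_conj']
  push_cast
  field_simp

lemma mul_logDeriv_blaschkeFactor (hz : ‖z‖ = 1) (hza : z ≠ a) :
    z * logDeriv (blaschkeFactor a) z = poissonKernel 0 a z := by
  have h := one_sub_conj_mul_ne_zero hz hza
  rw [logDeriv_blaschkeFactor hza h, ← mul_div_assoc,
    div_eq_iff (mul_ne_zero (sub_ne_zero.mpr hza) h), ofReal_poissonKernel_mul_eq hz hza,
    ← Complex.conj_mul', mul_comm z]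

end BlaschkeFactor

lemma poissonKernel_nonneg {c w z : ℂ} (h : ‖w - c‖ ≤ ‖z - c‖) : 0 ≤ poissonKernel c w z := by
  rw [poissonKernel_def]
  have : ‖w - c‖ ^ 2 ≤ ‖z - c‖ ^ 2 := by gcongr
  exact div_nonneg (sub_nonneg.mpr this) (sq_nonneg _)

lemma norm_deriv_blaschkeProduct {ι : Type*} (s : Finset ι) {a : ι → ℂ} {α z : ℂ}
    (hα : ‖α‖ = 1) (ha : ∀ k ∈ s, ‖a k‖ < 1) (hz : ‖z‖ = 1) :
    ‖deriv (fun w => α * ∏ k ∈ s, blaschkeFactor (a k) w) z‖ =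
      ∑ k ∈ s, poissonKernel 0 (a k) z := by
  have hza : ∀ k ∈ s, z ≠ a k := fun k hk h => (ha k hk).ne (h ▸ hz)
  set B := fun w => α * ∏ k ∈ s, blaschkeFactor (a k) w
  have hBz : ‖B z‖ = 1 := by
    simp only [B, norm_mul, norm_prod, hα, one_mul]
    exact prod_eq_one fun k hk => norm_blaschkeFactor hz (hza k hk)
  have hderiv : deriv B z = B z * logDeriv B z := by
    rw [logDeriv_apply, mul_div_cancel₀ _ (ne_zero_of_norm_ne_zero (hBz ▸ one_ne_zero))]
  have hlog : z * logDeriv B z = ∑ k ∈ s, (poissonKernel 0 (a k) z : ℂ) := by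
    rw [logDeriv_const_mul _ _ (ne_zero_of_norm_ne_zero (hα ▸ one_ne_zero)), logDeriv_prod,
      mul_sum]
    · exact sum_congr rfl fun k hk => mul_logDeriv_blaschkeFactor hz (hza k hk)
    · exact fun k hk =>
        ne_zero_of_norm_ne_zero ((norm_blaschkeFactor hz (hza k hk)).symm ▸ one_ne_zero)
    · exact fun k hk =>
        (hasDerivAt_blaschkeFactor (one_sub_conj_mul_ne_zero hz (hza k hk))).differentiableAt
  calc ‖deriv B z‖ = ‖z * logDeriv B z‖ := by rw [hderiv, norm_mul, hBz, norm_mul, hz]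
    _ = ‖((∑ k ∈ s, poissonKernel 0 (a k) z : ℝ) : ℂ)‖ := by rw [hlog, Complex.ofReal_sum]
    _ = ∑ k ∈ s, poissonKernel 0 (a k) z := by
      rw [Complex.norm_real, Real.norm_of_nonneg (sum_nonneg fun k hk => poissonKernel_nonneg ?_)]
      simpa [hz] using (ha k hk).le

lemma exists_eq_zero_of_sum_poissonKernel_eq_card {ι : Type*} {s : Finset ι} (hs : s.Nonempty)
    {a : ι → ℂ} (ha : ∀ k ∈ s, ‖a k‖ ≠ 1)
    (h : ∀ z, ‖z‖ = 1 → ∑ k ∈ s, poissonKernel 0 (a k) z = #s) : ∃ k ∈ s, a k = 0 := by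
  classical
  set Q : ℂ → ℂ → ℂ := fun b w => (w - b) * (1 - conj b * w)
  set G : ℂ → ℂ := fun w => ∑ k ∈ s, (1 - ‖a k‖ ^ 2 : ℂ) * w * ∏ j ∈ s.erase k, Q (a j) w -
    #s * ∏ j ∈ s, Q (a j) w
  have hG : Differentiable ℂ G := by simp only [G, Q]; fun_prop
  have hG_sphere : Set.EqOn G 0 (sphere 0 1) := by
    intro w hw
    rw [mem_sphere_zero_iff_norm] at hw
    have hwa : ∀ k ∈ s, w ≠ a k := fun k hk h => ha k hk (h ▸ hw)
    have : G w = (∑ k ∈ s, (poissonKernel 0 (a k) w : ℂ) - #s) * ∏ j ∈ s, Q (a j) w := by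
      simp only [G]
      rw [sub_mul, sum_mul]
      congr 1
      refine sum_congr rfl fun k hk => ?_
      rw [← mul_prod_erase s (fun j => Q (a j) w) hk, ← mul_assoc,
        ofReal_poissonKernel_mul_eq hw (hwa k hk)]
    rw [this, ← Complex.ofReal_sum, h w hw]
    simp
  have hG0 : G 0 = 0 := by
    refine Complex.eqOn_closure_of_eqOn_frontier isBounded_ball hG.diffContOnCl
      (differentiable_const 0).diffContOnCl ?_ (subset_closure (mem_ball_self one_pos))
    rwa [frontier_ball 0 one_ne_zero]
  simpa [G, Q, hs.ne_empty, prod_eq_zero_iff] using hG0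

theorem eq_zero_of_sum_poissonKernel_eq_card {ι : Type*} [Fintype ι] {a : ι → ℂ}
    (ha : ∀ k, ‖a k‖ ≠ 1) (h : ∀ z, ‖z‖ = 1 → ∑ k, poissonKernel 0 (a k) z = Fintype.card ι)
    (k : ι) : a k = 0 := by
  classical
  by_contra hk
  set W := univ.filter (a · ≠ 0)
  have hW : W.Nonempty := ⟨k, mem_filter.mpr ⟨mem_univ k, hk⟩⟩
  have hsumW : ∀ z, ‖z‖ = 1 → ∑ j ∈ W, poissonKernel 0 (a j) z = #W := by
    intro z hz
    have hW_sub : ∑ j ∈ W, (poissonKernel 0 (a j) z - 1) = ∑ j, (poissonKernel 0 (a j) z - 1) :=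
      sum_filter_of_ne fun j _ hj h0 => hj (by simp [poissonKernel_def, h0, hz])
    simp only [sum_sub_distrib, h z hz, sum_const, card_univ, nsmul_one] at hW_sub
    linarith
  obtain ⟨j, hjW, hj⟩ := exists_eq_zero_of_sum_poissonKernel_eq_card hW (fun j _ => ha j) hsumW
  exact (mem_filter.mp hjW).2 hj

/-- If a finite Blaschke product of degree `n` has `|B'| ≡ n` on the unit circle,
then `B(z) = α zⁿ` for some unimodular constant `α`. -/
theorem blaschke_constant_deriv (n : ℕ) (a : Fin n → ℂ)
    (ha : ∀ k, ‖a k‖ < 1) (α : ℂ) (hα : ‖α‖ = 1)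
    (B : ℂ → ℂ)
    (hB : ∀ z, B z = α * ∏ k, (z - a k) / (1 - (starRingEnd ℂ) (a k) * z))
    (hconst : ∀ z : ℂ, ‖z‖ = 1 → ‖deriv B z‖ = n) :
    ∃ β : ℂ, ‖β‖ = 1 ∧ ∀ z, B z = β * z ^ n := by
  have hB' : B = fun z => α * ∏ k, blaschkeFactor (a k) z := funext hB
  have hpoisson : ∀ z, ‖z‖ = 1 → ∑ k, poissonKernel 0 (a k) z = Fintype.card (Fin n) := by
    intro z hz
    rw [← norm_deriv_blaschkeProduct univ hα (fun k _ => ha k) hz, ← hB', hconst z hz,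
      Fintype.card_fin]
  have hzero := eq_zero_of_sum_poissonKernel_eq_card (fun k => (ha k).ne) hpoisson
  exact ⟨α, hα, fun z => by simp [hB, hzero]⟩
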